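/- If an algorithm A satisfies Pr[A(S) ∈ Y] ≤ e^ε Pr[A(S') ∈ Y] for all neighboring datasets S, S' and all measurable sets Y (ε-differential privacy), and the membership advantage is Adv = Pr[A = 0 | b = 0] - Pr[A = 0 | b = 1] where the conditional distributions of A's input under b = 0 and b = 1 differ only in a single data point, then Adv ≤ e^ε - 1. In particular, if p, q ∈ [0,1] satisfy p ≤ e^ε q and q ≤ 1, then p - q ≤ e^ε - 1. -/
import Mathlib

open MeasureTheory

/-- If `A` is `ε`-differentially private, so that the probabilities `p = Pr[A = 0 | b = 0]`
and `q = Pr[A = 0 | b = 1]` of the output event under the two neighboring input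
distributions satisfy `p ≤ e^ε q`, then the membership advantage `Adv = p - q` is at most
`e^ε - 1`.  In particular, for any `p, q ∈ [0,1]` with `p ≤ e^ε q`, `p - q ≤ e^ε - 1`. -/
theorem advantage_le_of_dp
    {Ω : Type*} [MeasurableSpace Ω] (μ0 μ1 : Measure Ω)
    [IsProbabilityMeasure μ0] [IsProbabilityMeasure μ1]
    (E : Set Ω) (ε : ℝ) (hε : 0 ≤ ε)
    (hdp : (μ0 E).toReal ≤ Real.exp ε * (μ1 E).toReal) :
    (μ0 E).toReal - (μ1 E).toReal ≤ Real.exp ε - 1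
      ∧ ∀ p q : ℝ, p ∈ Set.Icc (0 : ℝ) 1 → q ∈ Set.Icc (0 : ℝ) 1 →
          p ≤ Real.exp ε * q → p - q ≤ Real.exp ε - 1 := by
  have hexp : 1 ≤ Real.exp ε := Real.one_le_exp hε
  constructor
  · have hq1 : (μ1 E).toReal ≤ 1 := by
      have := prob_le_one (μ := μ1) (s := E)
      have := ENNReal.toReal_mono (by simp) this
      simpa using this
    nlinarith
  · intro p q hp hq hpq
    nlinarith [hq.2, hq.1]
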